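/- (Kurosh Subgroup Theorem) Let G = ∗_{α∈A} G_α be a free product of groups and H ≤ G. Given a Kurosh system {D_α, T_α : α ∈ A} for H, set z_{i,α} = α(H_i)·α₀(H_i)^{-1} for a fixed index α₀, Z = {z_{i,α} ≠ 1}, and F = ⟨Z⟩. Then H is the free product H = ∗_{α∈A} [ ∗_{u∈D_α} (u G_α u^{-1} ∩ H) ] ∗ F, and F is a free group with basis Z. -/

import Mathlib

open Monoid

variable {ι : Type} [DecidableEq ι] (Gf : ι → Type) [∀ i, Group (Gf i)]
  [∀ i, DecidableEq (Gf i)]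

/-- The syllable length of an element of a free product (length of its normal form). -/
def syl (g : CoprodI Gf) : ℕ := (CoprodI.Word.equiv g).toList.length

/-- The index of the last syllable of the normal form of an element of a free product. -/
def lastSyl (g : CoprodI Gf) : Option ι :=
  ((CoprodI.Word.equiv g).toList.getLast?).map Sigma.fst

/-- A Kurosh system for a subgroup `H` of the free product `G = ∗_α G_α`: for each `α`, a
right transversal `t α` of `H\G` (recorded as a coset-constant map `G → G` picking the
representative `α(Hg)` of `Hg`, with `α(H) = 1`) and a system `d α` of double coset
representatives of `H\G/G_α` (a double-coset-constant map picking `α(HgG_α)`), subject to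
the axioms (i)–(v). -/
structure KuroshSystem (H : Subgroup (CoprodI Gf)) where
  t : ι → CoprodI Gf → CoprodI Gf
  d : ι → CoprodI Gf → CoprodI Gf
  /-- `t α g` represents the right coset `Hg` -/
  t_coset : ∀ α g, g * (t α g)⁻¹ ∈ H
  /-- `t α` is constant on right cosets -/
  t_const : ∀ α g h, h ∈ H → t α (h * g) = t α g
  /-- `α(H) = 1` -/
  t_one : ∀ α, ∀ h ∈ H, t α h = 1
  /-- `d α g` lies in the double coset `HgG_α` -/
  d_coset : ∀ α g, ∃ h ∈ H, ∃ x : Gf α, d α g = h * g * CoprodI.of x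
  /-- `d α` is constant on double cosets -/
  d_const : ∀ α g h (x : Gf α), h ∈ H → d α (h * g * CoprodI.of x) = d α g
  /-- (i) if `g = α(HgG_α)` then `g = α(Hg)` -/
  ax_i : ∀ α g, t α (d α g) = d α g
  /-- (ii) `α(HgG_α)` is `1` or ends in a syllable `β ≠ α` -/
  ax_ii : ∀ α g, d α g = 1 ∨ ∃ β, β ≠ α ∧ lastSyl Gf (d α g) = some β
  /-- (iii) `H_i ⊆ HgG_α` with `g = α(HgG_α)` implies `α(H_i) ∈ gG_α` -/
  ax_iii : ∀ α g, ∀ h ∈ H, ∀ x : Gf α,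
    ∃ x' : Gf α, t α (h * d α g * CoprodI.of x) = d α g * CoprodI.of x'
  /-- (iv) if `1 ≠ g = α(HgG_α)` has last syllable in `G_β` then `β(Hg) = g` -/
  ax_iv : ∀ α g β, d α g ≠ 1 → lastSyl Gf (d α g) = some β → t β (d α g) = d α g
  /-- (v) `α(HgG_α)` has minimal syllable length in its double coset -/
  ax_v : ∀ α g, syl Gf (d α g) ≤ syl Gf g


/-!
Let `G` act on the right cosets `H\G`. Label the edge `Hk → Hkx` (`x ∈ G_α`) of this coset graph
by `θ_α(k)⁻¹ ψ(t_α(k) x t_α(kx)⁻¹) θ_α(kx)`, where `θ_α(k) = ζ(t_α(k) t_{α₀}(k)⁻¹)`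
(and `1` off `Z`).
These labels are multiplicative along each factor `G_α`, so multiplying them along the path that a
word traces from the coset `H` gives a map `H → K`; since the labels only depend on cosets, it is a
homomorphism. It extends `ψ` and `ζ` by the Kurosh axioms: every representative `s ≠ 1` with
`t_δ(s) = s` can be written `s = d_ε(s) x` with `x ≠ 1` and `t_ε(s) = s`, the last edge of this path
carries the label `θ_ε(d_ε(s))⁻¹ θ_ε(s)`, and induction on the syllable length shows that the path
to `s` has total label `θ_δ(s)`. Uniqueness holds because `H` is generated by the Schreier elements
`t_α(k) x t_α(kx)⁻¹ ∈ d_α(k) G_α d_α(k)⁻¹ ∩ H` together with `Z`.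
-/

section CoprodI

variable {J : Type*} {G : J → Type*} [∀ j, Group (G j)] {M K : Type*} [Group M] [Group K]

def rightTranslation : M →* MulAut (M → K) where
  toFun g :=
    { toFun := fun f k => f (k * g)
      invFun := fun f k => f (k * g⁻¹)
      left_inv := fun f => funext fun k => by simp
      right_inv := fun f => funext fun k => by simp
      map_mul' := fun _ _ => rfl }
  map_one' := by ext; simp
  map_mul' g g' := by ext; simp [mul_assoc]

/-- A labelling by `K` of the edges `Hk → Hkx` (`x ∈ G j`) of the coset graph of `H`,
multiplicative along each factor. -/
structure CosetCocycle (H : Subgroup (CoprodI G)) (K : Type*) [Group K] where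
  toFun : ∀ j, CoprodI G → G j → K
  toFun_mul : ∀ j k (x y : G j), toFun j k (x * y) = toFun j k x * toFun j (k * CoprodI.of x) y
  toFun_mul_left : ∀ j k (x : G j), ∀ h ∈ H, toFun j (h * k) x = toFun j k x

namespace CosetCocycle

variable {H : Subgroup (CoprodI G)} (c : CosetCocycle H K)

lemma toFun_one (j : J) (k : CoprodI G) : c.toFun j k 1 = 1 := by
  simpa using c.toFun_mul j k 1 1

/-- Cocycles are the homomorphisms into the wreath product `K ≀ G` that split its projection
to `G`. -/
def toWreath : CoprodI G →* (CoprodI G → K) ⋊[rightTranslation] CoprodI G :=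
  CoprodI.lift fun j =>
    { toFun := fun x => ⟨fun k => c.toFun j k x, CoprodI.of x⟩
      map_one' := SemidirectProduct.ext (funext fun k => c.toFun_one j k) (map_one _)
      map_mul' := fun x y =>
        SemidirectProduct.ext (funext fun k => c.toFun_mul j k x y) (map_mul _ x y) }

lemma toWreath_of {j : J} (x : G j) :
    c.toWreath (CoprodI.of x) = ⟨fun k => c.toFun j k x, CoprodI.of x⟩ :=
  CoprodI.lift_of _ _

lemma toWreath_right (g : CoprodI G) : (c.toWreath g).right = g := by
  suffices SemidirectProduct.rightHom.comp c.toWreath = MonoidHom.id _ from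
    DFunLike.congr_fun this g
  refine CoprodI.ext_hom _ _ fun j => MonoidHom.ext fun x => ?_
  simp [toWreath_of]

/-- The product of the labels along the path traced by `g` from the coset `Hk`. -/
def eval (g k : CoprodI G) : K := (c.toWreath g).left k

lemma eval_mul (g g' k : CoprodI G) : c.eval (g * g') k = c.eval g k * c.eval g' (k * g) := by
  unfold eval
  rw [_root_.map_mul]
  change (c.toWreath g).left k * (c.toWreath g').left (k * (c.toWreath g).right) = _
  rw [toWreath_right]

lemma eval_one (k : CoprodI G) : c.eval 1 k = 1 := by
  rw [eval, _root_.map_one]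
  rfl

lemma eval_of {j : J} (x : G j) (k : CoprodI G) : c.eval (CoprodI.of x) k = c.toFun j k x := by
  simp only [eval, toWreath_of]

lemma eval_inv (g k : CoprodI G) : c.eval g⁻¹ k = (c.eval g (k * g⁻¹))⁻¹ := by
  refine eq_inv_of_mul_eq_one_left ?_
  rw [← c.eval_mul, inv_mul_cancel, eval_one]

lemma eval_mul_left (g : CoprodI G) {h : CoprodI G} (hh : h ∈ H) (k : CoprodI G) :
    c.eval g (h * k) = c.eval g k := by
  induction g using CoprodI.induction_on generalizing k with
  | one => simp only [eval_one]
  | of j x => simp only [eval_of, c.toFun_mul_left j k x h hh]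
  | mul a b iha ihb => rw [eval_mul, eval_mul, iha, mul_assoc, ihb]

def toHom : H →* K where
  toFun h := c.eval h 1
  map_one' := c.eval_one 1
  map_mul' a b := by
    rw [Subgroup.coe_mul, eval_mul, one_mul, ← mul_one (a : CoprodI G), c.eval_mul_left _ a.2]

lemma toHom_apply_eq_mul_inv (h : H) {a b : CoprodI G} (hab : (h : CoprodI G) = a * b⁻¹) :
    c.toHom h = c.eval a 1 * (c.eval b 1)⁻¹ := by
  change c.eval h 1 = _
  rw [hab, eval_mul, eval_inv, one_mul, ← mul_one (a * b⁻¹), ← hab, c.eval_mul_left _ h.2]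

end CosetCocycle

abbrev kuroshFactor (H : Subgroup (CoprodI G)) (j : J) (u : CoprodI G) : Subgroup (CoprodI G) :=
  (CoprodI.of : G j →* CoprodI G).range.map (MulAut.conj u).toMonoidHom ⊓ H

/-- Reidemeister–Schreier generation. -/
lemma mul_inv_mem_of_schreier_generators (t : J → CoprodI G → CoprodI G) (j₀ : J)
    (E : Subgroup (CoprodI G)) (ht : t j₀ 1 = 1)
    (hz : ∀ j g, t j g * (t j₀ g)⁻¹ ∈ E)
    (hw : ∀ j g (x : G j), t j g * CoprodI.of x * (t j (g * CoprodI.of x))⁻¹ ∈ E)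
    (g : CoprodI G) : g * (t j₀ g)⁻¹ ∈ E := by
  suffices ∀ k, k * (t j₀ k)⁻¹ ∈ E → k * g * (t j₀ (k * g))⁻¹ ∈ E by
    simpa using this 1 (by simp [ht])
  induction g using CoprodI.induction_on with
  | one => simp
  | of j x =>
    intro k hk
    have key : k * CoprodI.of x * (t j₀ (k * CoprodI.of x))⁻¹ =
        k * (t j₀ k)⁻¹ * (t j k * (t j₀ k)⁻¹)⁻¹ *
          (t j k * CoprodI.of x * (t j (k * CoprodI.of x))⁻¹) *
          (t j (k * CoprodI.of x) * (t j₀ (k * CoprodI.of x))⁻¹) := by group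
    rw [key]
    exact mul_mem (mul_mem (mul_mem hk (inv_mem (hz j k))) (hw j k x)) (hz j _)
  | mul a b iha ihb =>
    intro k hk
    simpa only [mul_assoc] using ihb _ (iha k hk)

lemma ext_of_eq_on_schreier_generators {H : Subgroup (CoprodI G)} (t : J → CoprodI G → CoprodI G)
    (j₀ : J) (hcoset : ∀ j g, g * (t j g)⁻¹ ∈ H) (ht : ∀ h ∈ H, t j₀ h = 1) (γ₁ γ₂ : H →* K)
    (hz : ∀ j g (hm : t j g * (t j₀ g)⁻¹ ∈ H), γ₁ ⟨_, hm⟩ = γ₂ ⟨_, hm⟩)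
    (hw : ∀ j g (x : G j) (hm : t j g * CoprodI.of x * (t j (g * CoprodI.of x))⁻¹ ∈ H),
      γ₁ ⟨_, hm⟩ = γ₂ ⟨_, hm⟩) :
    γ₁ = γ₂ := by
  have hE : ∀ {g} (hg : g ∈ H), γ₁ ⟨g, hg⟩ = γ₂ ⟨g, hg⟩ → g ∈ (γ₁.eqLocus γ₂).map H.subtype :=
    fun hg he => ⟨⟨_, hg⟩, he, rfl⟩
  have hz_mem : ∀ j g, t j g * (t j₀ g)⁻¹ ∈ H := fun j g => by
    simpa [mul_assoc] using mul_mem (inv_mem (hcoset j g)) (hcoset j₀ g)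
  have hw_mem : ∀ j g (x : G j), t j g * CoprodI.of x * (t j (g * CoprodI.of x))⁻¹ ∈ H :=
    fun j g x => by
      simpa [mul_assoc] using mul_mem (inv_mem (hcoset j g)) (hcoset j (g * CoprodI.of x))
  ext h
  obtain ⟨h', hh', hval⟩ := mul_inv_mem_of_schreier_generators t j₀ _ (ht 1 (one_mem H))
    (fun j g => hE _ (hz j g (hz_mem j g))) (fun j g x => hE _ (hw j g x (hw_mem j g x))) h
  rw [ht h h.2, inv_one, mul_one] at hval
  rwa [← Subtype.ext hval]

end CoprodI

section Syllables

variable {Gf}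

lemma toList_equiv_mul_of {v : CoprodI Gf} {β : ι} {x : Gf β} (hx : x ≠ 1)
    (hv : lastSyl Gf v ≠ some β) :
    (CoprodI.Word.equiv (v * CoprodI.of x)).toList
      = (CoprodI.Word.equiv v).toList ++ [⟨β, x⟩] := by
  set w := CoprodI.Word.equiv v
  have hne : ∀ l ∈ w.toList ++ [⟨β, x⟩], Sigma.snd l ≠ 1 := by
    intro l hl
    rcases List.mem_append.mp hl with hl | hl
    · exact w.ne_one l hl
    · rw [List.mem_singleton.mp hl]
      exact hx
  have hchain : (w.toList ++ [(⟨β, x⟩ : Σ i, Gf i)]).IsChain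
      fun l l' => Sigma.fst l ≠ Sigma.fst l' := by
    refine List.isChain_append.2 ⟨w.chain_ne, List.isChain_singleton _, ?_⟩
    intro a ha b hb hab
    obtain rfl : b = (⟨β, x⟩ : Σ i, Gf i) := by simpa using hb.symm
    exact hv (by simp [lastSyl, w, Option.mem_def.mp ha, hab])
  have hprod : (⟨_, hne, hchain⟩ : CoprodI.Word Gf).prod = v * CoprodI.of x := by
    simp only [CoprodI.Word.prod, List.map_append, List.prod_append, List.map_singleton,
      List.prod_singleton]
    rw [← CoprodI.Word.prod, show w.prod = v from CoprodI.Word.equiv.symm_apply_apply v]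
  rw [← hprod]
  exact congrArg CoprodI.Word.toList (CoprodI.Word.equiv.apply_symm_apply _)

lemma syl_mul_of {v : CoprodI Gf} {β : ι} {x : Gf β} (hx : x ≠ 1)
    (hv : lastSyl Gf v ≠ some β) :
    syl Gf (v * CoprodI.of x) = syl Gf v + 1 := by
  simp [syl, toList_equiv_mul_of hx hv]

lemma lastSyl_one : lastSyl Gf (1 : CoprodI Gf) = none := by
  simp [lastSyl, CoprodI.Word.equiv, CoprodI.Word.empty]

end Syllables

namespace KuroshSystem

variable {Gf} {H : Subgroup (CoprodI Gf)} (ks : KuroshSystem Gf H)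

lemma t_mul_inv_mem (α : ι) (g : CoprodI Gf) : ks.t α g * g⁻¹ ∈ H := by
  simpa using inv_mem (ks.t_coset α g)

lemma t_t (β α : ι) (g : CoprodI Gf) : ks.t β (ks.t α g) = ks.t β g := by
  rw [← ks.t_const β g _ (ks.t_mul_inv_mem α g), inv_mul_cancel_right]

lemma d_mul_of (α : ι) (g : CoprodI Gf) (x : Gf α) : ks.d α (g * CoprodI.of x) = ks.d α g := by
  simpa using ks.d_const α g 1 x (one_mem H)

lemma d_mul_left (α : ι) {h : CoprodI Gf} (hh : h ∈ H) (g : CoprodI Gf) :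
    ks.d α (h * g) = ks.d α g := by
  simpa using ks.d_const α g h 1 hh

lemma d_d (α : ι) (g : CoprodI Gf) : ks.d α (ks.d α g) = ks.d α g := by
  obtain ⟨h, hh, x, hd⟩ := ks.d_coset α g
  rw [hd, ks.d_const α g h x hh, ← hd]

lemma exists_t_eq_d_mul_of (α : ι) (g : CoprodI Gf) :
    ∃ x : Gf α, ks.t α g = ks.d α g * CoprodI.of x := by
  obtain ⟨h, hh, y, hd⟩ := ks.d_coset α g
  obtain ⟨x, hx⟩ := ks.ax_iii α g 1 (one_mem H) y⁻¹
  have hg : g = h⁻¹ * (ks.d α g * CoprodI.of y⁻¹) := by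
    rw [hd]
    simp [mul_assoc]
  refine ⟨x, ?_⟩
  calc ks.t α g = ks.t α (h⁻¹ * (ks.d α g * CoprodI.of y⁻¹)) := congrArg (ks.t α) hg
    _ = ks.t α (ks.d α g * CoprodI.of y⁻¹) := ks.t_const α _ _ (inv_mem hh)
    _ = ks.d α g * CoprodI.of x := by simpa using hx

lemma lastSyl_d_ne (α : ι) (g : CoprodI Gf) : lastSyl Gf (ks.d α g) ≠ some α := by
  rcases ks.ax_ii α g with h | ⟨β, hβ, hlast⟩
  · simp [h, lastSyl_one]
  · simpa [hlast] using hβ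

lemma exists_d_mul_of_eq {δ : ι} {s : CoprodI Gf} (hs : ks.t δ s = s) (hs1 : s ≠ 1) :
    ∃ (ε : ι) (x : Gf ε), x ≠ 1 ∧ ks.t ε s = s ∧ ks.d ε s * CoprodI.of x = s := by
  obtain ⟨x, hx⟩ := ks.exists_t_eq_d_mul_of δ s
  by_cases hx1 : x ≠ 1
  · exact ⟨δ, x, hx1, hs, hx.symm.trans hs⟩
  -- Now `s = d_δ(s)`: by (ii) it ends in some `β ≠ δ`, and by (iv) `t_β(s) = s`.
  rw [not_not.mp hx1, map_one, mul_one, hs] at hx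
  obtain h1 | ⟨β, -, hlast⟩ := ks.ax_ii δ s
  · exact absurd (hx.trans h1) hs1
  rw [← hx] at hlast
  have htβ : ks.t β s = s := by
    simpa [← hx] using ks.ax_iv δ s β (hx ▸ hs1) (hx ▸ hlast)
  obtain ⟨y, hy⟩ := ks.exists_t_eq_d_mul_of β s
  refine ⟨β, y, ?_, htβ, hy.symm.trans htβ⟩
  rintro rfl
  rw [map_one, mul_one, htβ] at hy
  exact ks.lastSyl_d_ne β s (hy ▸ hlast)

lemma syl_d_lt {ε : ι} {s : CoprodI Gf} {x : Gf ε} (hx : x ≠ 1)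
    (hs : ks.d ε s * CoprodI.of x = s) : syl Gf (ks.d ε s) < syl Gf s := by
  have := syl_mul_of hx (ks.lastSyl_d_ne ε s)
  rw [hs] at this
  omega

def schreierGen (α : ι) (k : CoprodI Gf) (x : Gf α) : CoprodI Gf :=
  ks.t α k * CoprodI.of x * (ks.t α (k * CoprodI.of x))⁻¹

lemma schreierGen_mul (α : ι) (k : CoprodI Gf) (x y : Gf α) :
    ks.schreierGen α k x * ks.schreierGen α (k * CoprodI.of x) y = ks.schreierGen α k (x * y) := by
  simp [schreierGen, mul_assoc]

lemma schreierGen_mul_left (α : ι) {h : CoprodI Gf} (hh : h ∈ H) (k : CoprodI Gf) (x : Gf α) :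
    ks.schreierGen α (h * k) x = ks.schreierGen α k x := by
  simp only [schreierGen, mul_assoc, ks.t_const α _ h hh]

lemma schreierGen_mem (α : ι) (k : CoprodI Gf) (x : Gf α) :
    ks.schreierGen α k x ∈ kuroshFactor H α (ks.d α k) := by
  obtain ⟨x₀, h₀⟩ := ks.exists_t_eq_d_mul_of α k
  obtain ⟨x₁, h₁⟩ := ks.exists_t_eq_d_mul_of α (k * CoprodI.of x)
  rw [ks.d_mul_of] at h₁
  refine ⟨⟨CoprodI.of (x₀ * x * x₁⁻¹), ⟨_, rfl⟩, ?_⟩, ?_⟩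
  · simp [schreierGen, h₀, h₁, mul_assoc]
  · simpa [schreierGen, mul_assoc] using
      mul_mem (ks.t_mul_inv_mem α k) (ks.t_coset α (k * CoprodI.of x))

lemma schreierGen_eq_one {α : ι} {s : CoprodI Gf} {x : Gf α} (hs : ks.t α s = s)
    (hsx : ks.t α (s * CoprodI.of x) = s * CoprodI.of x) : ks.schreierGen α s x = 1 := by
  simp [schreierGen, hs, hsx]

variable {K : Type*} [Group K] (α₀ : ι)

def zSet : Set (CoprodI Gf) :=
  {z | z ≠ 1 ∧ ∃ (α : ι) (g : CoprodI Gf), z = ks.t α g * (ks.t α₀ g)⁻¹}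

noncomputable def zLabel (ζ : ks.zSet α₀ → K) (α : ι) (k : CoprodI Gf) : K :=
  Function.extend Subtype.val ζ 1 (ks.t α k * (ks.t α₀ k)⁻¹)

variable {α₀} (ζ : ks.zSet α₀ → K)

lemma zLabel_t (α β : ι) (k : CoprodI Gf) :
    ks.zLabel α₀ ζ α (ks.t β k) = ks.zLabel α₀ ζ α k := by
  simp only [zLabel, t_t]

lemma zLabel_mul_left (α : ι) {h : CoprodI Gf} (hh : h ∈ H) (k : CoprodI Gf) :
    ks.zLabel α₀ ζ α (h * k) = ks.zLabel α₀ ζ α k := by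
  simp only [zLabel, ks.t_const _ _ h hh]

lemma zLabel_congr {α β : ι} {k : CoprodI Gf} (h : ks.t α k = ks.t β k) :
    ks.zLabel α₀ ζ α k = ks.zLabel α₀ ζ β k := by
  simp only [zLabel, h]

lemma zLabel_eq_one {α : ι} {k : CoprodI Gf} (h : ks.t α k = ks.t α₀ k) :
    ks.zLabel α₀ ζ α k = 1 := by
  refine (Function.extend_apply' _ _ _ ?_).trans rfl
  rintro ⟨z, hz⟩
  exact z.2.1 (hz.trans (by rw [h, mul_inv_cancel]))

lemma zLabel_of_mem {α : ι} {g : CoprodI Gf} (hz : ks.t α g * (ks.t α₀ g)⁻¹ ∈ ks.zSet α₀) :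
    ks.zLabel α₀ ζ α g = ζ ⟨_, hz⟩ :=
  Subtype.val_injective.extend_apply ζ 1 ⟨_, hz⟩

variable (ψ : ∀ (α : ι) (u : Set.range (ks.d α)), kuroshFactor H α u →* K)

def psiGen (α : ι) (k : CoprodI Gf) (x : Gf α) : K :=
  ψ α ⟨ks.d α k, k, rfl⟩ ⟨ks.schreierGen α k x, ks.schreierGen_mem α k x⟩

lemma psi_congr {α : ι} {u v : Set.range (ks.d α)} (huv : u = v)
    {a : kuroshFactor H α u} {b : kuroshFactor H α v} (hab : (a : CoprodI Gf) = b) :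
    ψ α u a = ψ α v b := by
  subst huv
  rw [Subtype.ext hab]

lemma psiGen_mul (α : ι) (k : CoprodI Gf) (x y : Gf α) :
    ks.psiGen ψ α k x * ks.psiGen ψ α (k * CoprodI.of x) y = ks.psiGen ψ α k (x * y) := by
  have hd : (⟨ks.d α (k * CoprodI.of x), _, rfl⟩ : Set.range (ks.d α)) = ⟨ks.d α k, k, rfl⟩ :=
    Subtype.ext (ks.d_mul_of α k x)
  rw [psiGen, psiGen, ks.psi_congr ψ hd (b := ⟨_, hd ▸ ks.schreierGen_mem α _ y⟩) rfl,
    ← map_mul, psiGen]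
  exact ks.psi_congr ψ rfl (ks.schreierGen_mul α k x y)

lemma psiGen_mul_left (α : ι) {h : CoprodI Gf} (hh : h ∈ H) (k : CoprodI Gf) (x : Gf α) :
    ks.psiGen ψ α (h * k) x = ks.psiGen ψ α k x :=
  ks.psi_congr ψ (Subtype.ext (ks.d_mul_left α hh k)) (ks.schreierGen_mul_left α hh k x)

lemma psiGen_eq_one {α : ι} {k : CoprodI Gf} {x : Gf α} (h : ks.schreierGen α k x = 1) :
    ks.psiGen ψ α k x = 1 := by
  rw [psiGen, show (⟨_, ks.schreierGen_mem α k x⟩ : kuroshFactor H α _) = 1 from Subtype.ext h,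
    map_one]

noncomputable def cocycle : CosetCocycle H K where
  toFun α k x := (ks.zLabel α₀ ζ α k)⁻¹ * ks.psiGen ψ α k x * ks.zLabel α₀ ζ α (k * CoprodI.of x)
  toFun_mul α k x y := by
    rw [← psiGen_mul, map_mul, ← mul_assoc k]
    group
  toFun_mul_left α k x h hh := by
    rw [mul_assoc h, zLabel_mul_left _ _ _ hh, zLabel_mul_left _ _ _ hh, psiGen_mul_left _ _ _ hh]

lemma cocycle_toFun (α : ι) (k : CoprodI Gf) (x : Gf α) :
    (ks.cocycle ζ ψ).toFun α k x =
      (ks.zLabel α₀ ζ α k)⁻¹ * ks.psiGen ψ α k x * ks.zLabel α₀ ζ α (k * CoprodI.of x) :=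
  rfl

lemma cocycle_eval_eq_zLabel {δ : ι} {s : CoprodI Gf} (hs : ks.t δ s = s) :
    (ks.cocycle ζ ψ).eval s 1 = ks.zLabel α₀ ζ δ s := by
  induction hn : syl Gf s using Nat.strong_induction_on generalizing δ s with
  | _ n ih =>
    by_cases hs1 : s = 1
    · subst hs1
      rw [CosetCocycle.eval_one, zLabel_eq_one ks ζ (by rw [ks.t_one δ 1 (one_mem H),
        ks.t_one α₀ 1 (one_mem H)])]
    obtain ⟨ε, x, hx, hεs, hdx⟩ := ks.exists_d_mul_of_eq hs hs1
    set v := ks.d ε s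
    have hv : ks.t ε v = v := ks.ax_i ε s
    have hsx : ks.t ε (v * CoprodI.of x) = v * CoprodI.of x := hdx ▸ hεs
    calc (ks.cocycle ζ ψ).eval s 1
        = (ks.cocycle ζ ψ).eval v 1 * (ks.cocycle ζ ψ).toFun ε v x := by
          rw [← hdx, CosetCocycle.eval_mul, CosetCocycle.eval_of, one_mul]
      _ = ks.zLabel α₀ ζ ε v * ((ks.zLabel α₀ ζ ε v)⁻¹ * 1 * ks.zLabel α₀ ζ ε s) := by
          rw [ih _ (hn ▸ ks.syl_d_lt hx hdx) hv rfl, cocycle_toFun,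
            ks.psiGen_eq_one ψ (ks.schreierGen_eq_one hv hsx), hdx]
      _ = ks.zLabel α₀ ζ δ s := by
          rw [zLabel_congr ks ζ (hεs.trans hs.symm)]
          group

lemma cocycle_toHom_zSet (z : ks.zSet α₀) (hz : (z : CoprodI Gf) ∈ H) :
    (ks.cocycle ζ ψ).toHom ⟨z, hz⟩ = ζ z := by
  obtain ⟨z, hz1, α, g, rfl⟩ := z
  rw [CosetCocycle.toHom_apply_eq_mul_inv _ _ rfl, cocycle_eval_eq_zLabel ks ζ ψ (ks.t_t α α g),
    cocycle_eval_eq_zLabel ks ζ ψ (ks.t_t α₀ α₀ g), zLabel_t, zLabel_eq_one ks ζ rfl, inv_one,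
    mul_one, zLabel_of_mem ks ζ ⟨hz1, α, g, rfl⟩]

lemma cocycle_toHom_kuroshFactor (α : ι) (u : Set.range (ks.d α)) (h : kuroshFactor H α u) :
    (ks.cocycle ζ ψ).toHom ⟨h, (Subgroup.mem_inf.mp h.2).2⟩ = ψ α u h := by
  obtain ⟨d, hu⟩ := u
  obtain ⟨g, hg⟩ := id hu
  obtain ⟨⟨_, ⟨x, rfl⟩, hconj⟩, hH⟩ := h.2
  have hval : (h : CoprodI Gf) = d * CoprodI.of x * d⁻¹ := hconj.symm
  have hd : ks.t α d = d := hg ▸ ks.ax_i α g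
  have hdx : d * CoprodI.of x = h * d := by rw [hval]; group
  have hdx' : ks.t α (d * CoprodI.of x) = d := by rw [hdx, ks.t_const α _ _ hH, hd]
  refine (CosetCocycle.toHom_apply_eq_mul_inv _ ⟨(h : CoprodI Gf), hH⟩ hval).trans ?_
  have hdd : ks.d α d = d := by rw [← hg, ks.d_d]
  have hψ : ks.psiGen ψ α d x = ψ α ⟨d, hu⟩ h :=
    ks.psi_congr ψ (Subtype.ext hdd) (by simp only [schreierGen, hd, hdx', ← hval])
  rw [CosetCocycle.eval_mul, CosetCocycle.eval_of, one_mul, cocycle_eval_eq_zLabel ks ζ ψ hd,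
    cocycle_toFun, hψ, hdx, zLabel_mul_left ks ζ α hH]
  group

lemma hom_ext (γ₁ γ₂ : H →* K)
    (hψ : ∀ α (u : Set.range (ks.d α)) (h : kuroshFactor H α u),
      γ₁ ⟨h, (Subgroup.mem_inf.mp h.2).2⟩ = γ₂ ⟨h, (Subgroup.mem_inf.mp h.2).2⟩)
    (hζ : ∀ (z : ks.zSet α₀) (hz : (z : CoprodI Gf) ∈ H), γ₁ ⟨z, hz⟩ = γ₂ ⟨z, hz⟩) :
    γ₁ = γ₂ := by
  refine ext_of_eq_on_schreier_generators ks.t α₀ ks.t_coset (fun h hh => ks.t_one α₀ h hh) γ₁ γ₂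
    (fun α g hm => ?_) (fun α g x _ => hψ α ⟨_, g, rfl⟩ ⟨_, ks.schreierGen_mem α g x⟩)
  by_cases h1 : ks.t α g * (ks.t α₀ g)⁻¹ = 1
  · rw [show (⟨_, hm⟩ : H) = 1 from Subtype.ext h1, map_one, map_one]
  · exact hζ ⟨_, h1, α, g, rfl⟩ hm

end KuroshSystem

/-- Kurosh Subgroup Theorem: given a Kurosh system for `H ≤ G = ∗_α G_α` and
a fixed index `α₀`, with `z_{i,α} = α(H_i)·α₀(H_i)⁻¹` and `Z` the set of nontrivial such
elements, `H = ∗_α [∗_{u ∈ D_α} (uG_αu⁻¹ ∩ H)] ∗ F` where `F` is free with basis `Z`: every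
family of homomorphisms `ψ_u : uG_αu⁻¹ ∩ H → K` (for `u ∈ D_α`, `α ∈ A`) together with any
map `ζ : Z → K` extends uniquely to a homomorphism `H → K`. -/
theorem kurosh_subgroup_theorem {ι : Type} [DecidableEq ι] (Gf : ι → Type)
    [∀ i, Group (Gf i)] [∀ i, DecidableEq (Gf i)] (H : Subgroup (CoprodI Gf))
    (ks : KuroshSystem Gf H) (α₀ : ι)
    (hZ : ∀ z : CoprodI Gf,
      (z ≠ 1 ∧ ∃ (α : ι) (g : CoprodI Gf), z = ks.t α g * (ks.t α₀ g)⁻¹) → z ∈ H)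
    (K : Type) [Group K]
    (ψ : ∀ (α : ι) (u : Set.range (ks.d α)),
      ↥(((CoprodI.of : Gf α →* CoprodI Gf).range.map
            (MulAut.conj (u : CoprodI Gf)).toMonoidHom) ⊓ H) →* K)
    (ζ : {z : CoprodI Gf //
      z ≠ 1 ∧ ∃ (α : ι) (g : CoprodI Gf), z = ks.t α g * (ks.t α₀ g)⁻¹} → K) :
    ∃! γ : H →* K,
      (∀ (α : ι) (u : Set.range (ks.d α))
          (h : ↥(((CoprodI.of : Gf α →* CoprodI Gf).range.map
            (MulAut.conj (u : CoprodI Gf)).toMonoidHom) ⊓ H)),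
        γ ⟨(h : CoprodI Gf), (Subgroup.mem_inf.mp h.2).2⟩ = ψ α u h) ∧
      (∀ z : {z : CoprodI Gf //
          z ≠ 1 ∧ ∃ (α : ι) (g : CoprodI Gf), z = ks.t α g * (ks.t α₀ g)⁻¹},
        γ ⟨(z : CoprodI Gf), hZ z z.2⟩ = ζ z) := by
  refine ⟨(ks.cocycle ζ ψ).toHom, ⟨ks.cocycle_toHom_kuroshFactor ζ ψ,
    fun z => ks.cocycle_toHom_zSet ζ ψ z _⟩, ?_⟩
  rintro γ ⟨hγψ, hγζ⟩
  exact ks.hom_ext γ _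
    (fun α u h => (hγψ α u h).trans (ks.cocycle_toHom_kuroshFactor ζ ψ α u h).symm)
    (fun z hz => (hγζ z).trans (ks.cocycle_toHom_zSet ζ ψ z hz).symm)
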